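/- arXiv:2306.16973 — 2 statements merged into one kernel-verified Lean document; each statement's English description precedes it below -/
import Mathlib

section
/- Let n, m, M be positive integers and fix a noise model (Φ11, Φ12, Φ22) with Φ11 ∈ ℝ^{n×n} symmetric, Φ12 ∈ ℝ^{n×M}, and Φ22 ∈ ℝ^{M×M} symmetric negative definite. Let (X, X⁺, U) be a data triple with X, X⁺ ∈ ℝ^{n×M}, U ∈ ℝ^{m×M}. Then a pair (A, B) ∈ ℝ^{n×n} × ℝ^{n×m} belongs to the consistency set Σ of (X, X⁺, U) if and only if [Iₙ, A, B] · V · [Iₙ, A, B]ᵀ ⪰ 0 (positive semidefinite), where V = G Φ Gᵀ with G = [[Iₙ, X⁺], [0, −X], [0, −U]] ∈ ℝ^{(2n+m)×(n+M)} and Φ = [[Φ11, Φ12], [Φ12ᵀ, Φ22]]. -/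
open Matrix

/-- The noise set `𝒲`: matrices `W ∈ ℝ^{n×M}` with
`Φ11 + Φ12 Wᵀ + W Φ12ᵀ + W Φ22 Wᵀ ⪰ 0`. -/
def InNoiseSet {n M : ℕ} (Φ11 : Matrix (Fin n) (Fin n) ℝ)
    (Φ12 : Matrix (Fin n) (Fin M) ℝ) (Φ22 : Matrix (Fin M) (Fin M) ℝ)
    (W : Matrix (Fin n) (Fin M) ℝ) : Prop :=
  (Φ11 + Φ12 * Wᵀ + W * Φ12ᵀ + W * Φ22 * Wᵀ).PosSemidef

/-- Membership in the consistency set `Σ` of a data triple `(X, X⁺, U)`. -/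
def Consistent {n m M : ℕ} (Φ11 : Matrix (Fin n) (Fin n) ℝ)
    (Φ12 : Matrix (Fin n) (Fin M) ℝ) (Φ22 : Matrix (Fin M) (Fin M) ℝ)
    (X Xp : Matrix (Fin n) (Fin M) ℝ) (U : Matrix (Fin m) (Fin M) ℝ)
    (A : Matrix (Fin n) (Fin n) ℝ) (B : Matrix (Fin n) (Fin m) ℝ) : Prop :=
  ∃ W : Matrix (Fin n) (Fin M) ℝ,
    InNoiseSet Φ11 Φ12 Φ22 W ∧ Xp = A * X + B * U + W

/-! `[I, A, B] G = [I, W]` with `W = X⁺ - A X - B U` the residual of `(A, B)` on the data, so the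
quadratic form is `Φ11 + Φ12 Wᵀ + W Φ12ᵀ + W Φ22 Wᵀ`; and `(A, B) ∈ Σ` exactly when this residual
lies in `𝒲`. -/

section BlockAlgebra

variable {α : Type*} {k l p : Type*} [Fintype k] [DecidableEq k]

theorem Matrix.fromCols_one_mul_fromBlocks_mul_transpose [CommRing α] [Fintype l]
    (W : Matrix k l α) (P : Matrix k k α) (Q : Matrix k l α) (R : Matrix l k α)
    (S : Matrix l l α) :
    fromCols (1 : Matrix k k α) W * fromBlocks P Q R S * (fromCols (1 : Matrix k k α) W)ᵀ =
      P + Q * Wᵀ + W * R + W * S * Wᵀ := by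
  rw [fromCols_mul_fromBlocks, transpose_fromCols, fromCols_mul_fromRows]
  simp only [Matrix.one_mul, Matrix.mul_one, transpose_one, Matrix.add_mul]
  abel

theorem Matrix.fromCols_one_fromCols_mul_fromBlocks [Ring α] [Fintype p]
    (A : Matrix k k α) (B : Matrix k p α) (Y : Matrix k l α) (X : Matrix k l α)
    (U : Matrix p l α) :
    (fromCols 1 (fromCols A B) : Matrix k (k ⊕ (k ⊕ p)) α) *
        (fromBlocks 1 Y 0 (-(fromRows X U)) : Matrix (k ⊕ (k ⊕ p)) (k ⊕ l) α) =
      fromCols 1 (Y - (A * X + B * U)) := by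
  rw [fromCols_mul_fromBlocks, Matrix.mul_neg, fromCols_mul_fromRows]
  simp only [Matrix.one_mul, Matrix.mul_one, Matrix.mul_zero, add_zero, sub_eq_add_neg]

end BlockAlgebra

theorem consistent_iff_inNoiseSet {n m M : ℕ} (Φ11 : Matrix (Fin n) (Fin n) ℝ)
    (Φ12 : Matrix (Fin n) (Fin M) ℝ) (Φ22 : Matrix (Fin M) (Fin M) ℝ)
    (X Xp : Matrix (Fin n) (Fin M) ℝ) (U : Matrix (Fin m) (Fin M) ℝ)
    (A : Matrix (Fin n) (Fin n) ℝ) (B : Matrix (Fin n) (Fin m) ℝ) :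
    Consistent Φ11 Φ12 Φ22 X Xp U A B ↔ InNoiseSet Φ11 Φ12 Φ22 (Xp - (A * X + B * U)) := by
  constructor
  · rintro ⟨W, hW, rfl⟩
    rwa [add_sub_cancel_left]
  · intro h
    exact ⟨_, h, (add_sub_cancel _ _).symm⟩

theorem consistency_set_iff_quadratic_matrix_inequality_general
    {n m M : ℕ}
    (Φ11 : Matrix (Fin n) (Fin n) ℝ) (Φ12 : Matrix (Fin n) (Fin M) ℝ)
    (Φ22 : Matrix (Fin M) (Fin M) ℝ)
    (X Xp : Matrix (Fin n) (Fin M) ℝ) (U : Matrix (Fin m) (Fin M) ℝ)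
    (A : Matrix (Fin n) (Fin n) ℝ) (B : Matrix (Fin n) (Fin m) ℝ) :
    Consistent Φ11 Φ12 Φ22 X Xp U A B ↔
      (letI Φ : Matrix (Fin n ⊕ Fin M) (Fin n ⊕ Fin M) ℝ :=
        fromBlocks Φ11 Φ12 Φ12ᵀ Φ22
      letI G : Matrix (Fin n ⊕ (Fin n ⊕ Fin m)) (Fin n ⊕ Fin M) ℝ :=
        fromBlocks 1 Xp 0 (-(fromRows X U))
      letI V := G * Φ * Gᵀ
      letI IAB : Matrix (Fin n) (Fin n ⊕ (Fin n ⊕ Fin m)) ℝ :=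
        fromCols 1 (fromCols A B)
      (IAB * V * IABᵀ).PosSemidef) := by
  -- regroup `IAB * (G * Φ * Gᵀ) * IABᵀ` as `(IAB * G) * Φ * (IAB * G)ᵀ`
  simp only [← Matrix.mul_assoc]
  rw [Matrix.mul_assoc _ _ (fromCols 1 _)ᵀ, ← transpose_mul, fromCols_one_fromCols_mul_fromBlocks,
    fromCols_one_mul_fromBlocks_mul_transpose, consistent_iff_inNoiseSet, InNoiseSet]

theorem consistency_set_iff_quadratic_matrix_inequality
    {n m M : ℕ} (hn : 0 < n) (hm : 0 < m) (hM : 0 < M)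
    (Φ11 : Matrix (Fin n) (Fin n) ℝ) (Φ12 : Matrix (Fin n) (Fin M) ℝ)
    (Φ22 : Matrix (Fin M) (Fin M) ℝ)
    (hΦ11 : Φ11 = Φ11ᵀ) (hΦ22sym : Φ22 = Φ22ᵀ) (hΦ22 : (-Φ22).PosDef)
    (X Xp : Matrix (Fin n) (Fin M) ℝ) (U : Matrix (Fin m) (Fin M) ℝ)
    (A : Matrix (Fin n) (Fin n) ℝ) (B : Matrix (Fin n) (Fin m) ℝ) :
    Consistent Φ11 Φ12 Φ22 X Xp U A B ↔
      (letI Φ : Matrix (Fin n ⊕ Fin M) (Fin n ⊕ Fin M) ℝ :=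
        fromBlocks Φ11 Φ12 Φ12ᵀ Φ22
      letI G : Matrix (Fin n ⊕ (Fin n ⊕ Fin m)) (Fin n ⊕ Fin M) ℝ :=
        fromBlocks 1 Xp 0 (-(fromRows X U))
      letI V := G * Φ * Gᵀ
      letI IAB : Matrix (Fin n) (Fin n ⊕ (Fin n ⊕ Fin m)) ℝ :=
        fromCols 1 (fromCols A B)
      (IAB * V * IABᵀ).PosSemidef) :=
  consistency_set_iff_quadratic_matrix_inequality_general Φ11 Φ12 Φ22 X Xp U A B
end

section
/- Let n, m, M be positive integers, fix a noise model (Φ11, Φ12, Φ22) with Φ11 ∈ ℝ^{n×n} symmetric, Φ12 ∈ ℝ^{n×M}, Φ22 ∈ ℝ^{M×M} symmetric negative definite, and let (X, X⁺, U) be a data triple satisfying the generalized Slater condition. If there exist P ∈ ℝ^{n×n} with P = Pᵀ ≻ 0, L ∈ ℝ^{m×n}, and scalars a ≥ 0, b > 0 satisfying the stabilization LMI for (X, X⁺, U), then K := L P⁻¹ quadratically stabilizes, with Lyapunov matrix P, every system in the consistency set Σ of (X, X⁺, U); that is, P − (A + B K) P (A + B K)ᵀ ≻ 0 for all (A, B)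 ∈ Σ. -/
/-!
Let `K = L P⁻¹` and `W = X⁺ - A X - B U`, the noise realising `(A, B) ∈ Σ`. Conjugating the
stabilization LMI by `v = [I; Aᵀ; Bᵀ; -P⁻¹ Lᵀ Bᵀ]` turns its constant block into
`P - (A + B K) P (A + B K)ᵀ - b I` (the last block row is chosen to complete the square in `L`)
and its multiplier block into `a (Φ11 + Φ12 Wᵀ + W Φ12ᵀ + W Φ22 Wᵀ)`, which is positive
semidefinite because `W ∈ 𝒲`. Hence `P - (A + B K) P (A + B K)ᵀ ⪰ b I ≻ 0`.
-/

open Matrix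

/-- The generalized Slater condition for the data triple `(X, X⁺, U)`. -/
def Slater {n m M : ℕ} (Φ11 : Matrix (Fin n) (Fin n) ℝ)
    (Φ12 : Matrix (Fin n) (Fin M) ℝ) (Φ22 : Matrix (Fin M) (Fin M) ℝ)
    (X Xp : Matrix (Fin n) (Fin M) ℝ) (U : Matrix (Fin m) (Fin M) ℝ) : Prop :=
  ∃ Z : Matrix (Fin n ⊕ Fin m) (Fin n) ℝ,
    (letI Φ : Matrix (Fin n ⊕ Fin M) (Fin n ⊕ Fin M) ℝ :=
      fromBlocks Φ11 Φ12 Φ12ᵀ Φ22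
    letI G : Matrix (Fin n ⊕ (Fin n ⊕ Fin m)) (Fin n ⊕ Fin M) ℝ :=
      fromBlocks 1 Xp 0 (-(fromRows X U))
    letI IZ : Matrix (Fin n ⊕ (Fin n ⊕ Fin m)) (Fin n) ℝ := fromRows 1 Z
    (IZᵀ * (G * Φ * Gᵀ) * IZ).PosSemidef)

/-- The stabilization LMI for the data triple `(X, X⁺, U)` in variables `(P, L, a, b)`. -/
def StabLMI {n m M : ℕ} (Φ11 : Matrix (Fin n) (Fin n) ℝ)
    (Φ12 : Matrix (Fin n) (Fin M) ℝ) (Φ22 : Matrix (Fin M) (Fin M) ℝ)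
    (X Xp : Matrix (Fin n) (Fin M) ℝ) (U : Matrix (Fin m) (Fin M) ℝ)
    (P : Matrix (Fin n) (Fin n) ℝ) (L : Matrix (Fin m) (Fin n) ℝ)
    (a b : ℝ) : Prop :=
  letI Φ : Matrix (Fin n ⊕ Fin M) (Fin n ⊕ Fin M) ℝ :=
    fromBlocks Φ11 Φ12 Φ12ᵀ Φ22
  letI Ghat : Matrix (Fin n ⊕ (Fin n ⊕ (Fin m ⊕ Fin n))) (Fin n ⊕ Fin M) ℝ :=
    fromBlocks 1 Xp 0 (fromRows (-X) (fromRows (-U) 0))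
  letI Blk : Matrix (Fin n ⊕ (Fin n ⊕ (Fin m ⊕ Fin n)))
      (Fin n ⊕ (Fin n ⊕ (Fin m ⊕ Fin n))) ℝ :=
    fromBlocks (P - b • 1) 0 0
      (fromBlocks (-P) (fromCols (-Lᵀ) 0) (fromRows (-L) 0)
        (fromBlocks 0 L Lᵀ P))
  (Blk - a • (Ghat * Φ * Ghatᵀ)).PosSemidef

section Algebra

variable {R : Type*} [CommRing R] {ι κ μ : Type*} [Fintype ι] [Fintype κ] [DecidableEq ι]

theorem fromCols_one_mul_fromBlocks_mul_fromRows_one [Fintype μ] (Φ11 : Matrix ι ι R)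
    (Φ12 : Matrix ι μ R) (Φ22 : Matrix μ μ R) (W : Matrix ι μ R) :
    fromCols (1 : Matrix ι ι R) W * fromBlocks Φ11 Φ12 Φ12ᵀ Φ22 * fromRows (1 : Matrix ι ι R) Wᵀ =
      Φ11 + Φ12 * Wᵀ + W * Φ12ᵀ + W * Φ22 * Wᵀ := by
  rw [fromCols_mul_fromBlocks, fromCols_mul_fromRows]
  simp only [Matrix.one_mul, Matrix.mul_one, Matrix.add_mul]
  abel

/-- The matrix `Ĝ` of the stabilization LMI. -/
def lmiData (X Xp : Matrix ι μ R) (U : Matrix κ μ R) :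
    Matrix (ι ⊕ (ι ⊕ (κ ⊕ ι))) (ι ⊕ μ) R :=
  fromBlocks 1 Xp 0 (fromRows (-X) (fromRows (-U) 0))

/-- The constant block matrix of the stabilization LMI. -/
def lmiBlock (P : Matrix ι ι R) (L : Matrix κ ι R) (b : R) :
    Matrix (ι ⊕ (ι ⊕ (κ ⊕ ι))) (ι ⊕ (ι ⊕ (κ ⊕ ι))) R :=
  fromBlocks (P - b • 1) 0 0
    (fromBlocks (-P) (fromCols (-Lᵀ) 0) (fromRows (-L) 0) (fromBlocks 0 L Lᵀ P))

def lmiTest (A : Matrix ι ι R) (B : Matrix ι κ R) (Y : Matrix ι ι R) :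
    Matrix (ι ⊕ (ι ⊕ (κ ⊕ ι))) ι R :=
  fromRows 1 (fromRows Aᵀ (fromRows Bᵀ Y))

theorem transpose_lmiTest_mul_lmiData (A : Matrix ι ι R) (B : Matrix ι κ R) (Y : Matrix ι ι R)
    (X Xp : Matrix ι μ R) (U : Matrix κ μ R) :
    (lmiTest A B Y)ᵀ * lmiData X Xp U = fromCols 1 (Xp - A * X - B * U) := by
  simp only [lmiTest, lmiData, transpose_fromRows, transpose_one, transpose_transpose,
    fromCols_mul_fromBlocks, fromCols_mul_fromRows, Matrix.mul_zero, Matrix.one_mul,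
    Matrix.mul_neg, add_zero]
  abel_nf

theorem transpose_lmiTest_mul_lmiDataGram_mul_lmiTest [Fintype μ] (A : Matrix ι ι R)
    (B : Matrix ι κ R) (Y : Matrix ι ι R) {X Xp W : Matrix ι μ R} {U : Matrix κ μ R}
    (hXp : Xp = A * X + B * U + W) (Φ11 : Matrix ι ι R) (Φ12 : Matrix ι μ R)
    (Φ22 : Matrix μ μ R) :
    (lmiTest A B Y)ᵀ * (lmiData X Xp U * fromBlocks Φ11 Φ12 Φ12ᵀ Φ22 * (lmiData X Xp U)ᵀ) *
        lmiTest A B Y =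
      Φ11 + Φ12 * Wᵀ + W * Φ12ᵀ + W * Φ22 * Wᵀ := by
  have hG : (lmiTest A B Y)ᵀ * lmiData X Xp U = fromCols 1 W := by
    rw [transpose_lmiTest_mul_lmiData, hXp]
    abel_nf
  calc _ = ((lmiTest A B Y)ᵀ * lmiData X Xp U) * fromBlocks Φ11 Φ12 Φ12ᵀ Φ22 *
        ((lmiTest A B Y)ᵀ * lmiData X Xp U)ᵀ := by
          simp only [transpose_mul, transpose_transpose, Matrix.mul_assoc]
    _ = _ := by
      rw [hG, transpose_fromCols, transpose_one, fromCols_one_mul_fromBlocks_mul_fromRows_one]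

theorem transpose_lmiTest_mul_lmiBlock_mul_lmiTest (A : Matrix ι ι R) (B : Matrix ι κ R)
    (Y P : Matrix ι ι R) (L : Matrix κ ι R) (b : R) :
    (lmiTest A B Y)ᵀ * lmiBlock P L b * lmiTest A B Y =
      P - b • 1 - (A * P * Aᵀ + A * Lᵀ * Bᵀ + B * L * Aᵀ) +
        (B * L * Y + Yᵀ * Lᵀ * Bᵀ + Yᵀ * P * Y) := by
  rw [Matrix.mul_assoc]
  simp only [lmiTest, lmiBlock, transpose_fromRows, transpose_one, transpose_transpose,
    fromBlocks_mul_fromRows, fromCols_mul_fromRows, fromRows_mul, Matrix.zero_mul,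
    Matrix.mul_zero, Matrix.one_mul, Matrix.mul_one, Matrix.mul_neg, Matrix.neg_mul, add_zero,
    zero_add, Matrix.mul_add]
  simp only [Matrix.mul_assoc]
  abel

variable {P : Matrix ι ι R} (B : Matrix ι κ R) (L : Matrix κ ι R)

theorem closedLoop_mul_mul_transpose (A : Matrix ι ι R) (hP : Pᵀ = P) (hdet : IsUnit P.det) :
    (A + B * (L * P⁻¹)) * P * (A + B * (L * P⁻¹))ᵀ =
      A * P * Aᵀ + A * Lᵀ * Bᵀ + B * L * Aᵀ + B * L * P⁻¹ * Lᵀ * Bᵀ := by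
  have hinv : P⁻¹ᵀ = P⁻¹ := by rw [transpose_nonsing_inv, hP]
  simp only [transpose_add, transpose_mul, hinv, Matrix.add_mul, Matrix.mul_add, Matrix.mul_assoc,
    nonsing_inv_mul_cancel_left _ _ hdet, mul_nonsing_inv_cancel_left _ _ hdet]
  abel

theorem lmi_completing_square (hP : Pᵀ = P) (hdet : IsUnit P.det) :
    B * L * -(P⁻¹ * Lᵀ * Bᵀ) + (-(P⁻¹ * Lᵀ * Bᵀ))ᵀ * Lᵀ * Bᵀ +
        (-(P⁻¹ * Lᵀ * Bᵀ))ᵀ * P * -(P⁻¹ * Lᵀ * Bᵀ) =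
      -(B * L * P⁻¹ * Lᵀ * Bᵀ) := by
  have hinv : P⁻¹ᵀ = P⁻¹ := by rw [transpose_nonsing_inv, hP]
  simp only [transpose_neg, transpose_mul, transpose_transpose, hinv, Matrix.neg_mul,
    Matrix.mul_neg, neg_neg, Matrix.mul_assoc, mul_nonsing_inv_cancel_left _ _ hdet]
  abel

theorem transpose_lmiTest_mul_lmiBlock_mul_lmiTest_of_gain (A : Matrix ι ι R) (b : R)
    (hP : Pᵀ = P) (hdet : IsUnit P.det) :
    (lmiTest A B (-(P⁻¹ * Lᵀ * Bᵀ)))ᵀ * lmiBlock P L b * lmiTest A B (-(P⁻¹ * Lᵀ * Bᵀ)) =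
      P - (A + B * (L * P⁻¹)) * P * (A + B * (L * P⁻¹))ᵀ - b • 1 := by
  rw [transpose_lmiTest_mul_lmiBlock_mul_lmiTest, lmi_completing_square B L hP hdet,
    closedLoop_mul_mul_transpose B L A hP hdet]
  abel

end Algebra

theorem stabLMI_iff {n m M : ℕ} (Φ11 : Matrix (Fin n) (Fin n) ℝ)
    (Φ12 : Matrix (Fin n) (Fin M) ℝ) (Φ22 : Matrix (Fin M) (Fin M) ℝ)
    (X Xp : Matrix (Fin n) (Fin M) ℝ) (U : Matrix (Fin m) (Fin M) ℝ)
    (P : Matrix (Fin n) (Fin n) ℝ) (L : Matrix (Fin m) (Fin n) ℝ) (a b : ℝ) :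
    StabLMI Φ11 Φ12 Φ22 X Xp U P L a b ↔
      (lmiBlock P L b -
        a • (lmiData X Xp U * fromBlocks Φ11 Φ12 Φ12ᵀ Φ22 * (lmiData X Xp U)ᵀ)).PosSemidef :=
  Iff.rfl

theorem posDef_of_posSemidef_sub_smul_one_sub_smul {ι : Type*} [Fintype ι] [DecidableEq ι]
    {S Ψ : Matrix ι ι ℝ} {a b : ℝ} (h : (S - b • 1 - a • Ψ).PosSemidef) (hΨ : Ψ.PosSemidef)
    (ha : 0 ≤ a) (hb : 0 < b) : S.PosDef := by
  have hS : S = (S - b • 1 - a • Ψ) + a • Ψ + b • 1 := by abel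
  rw [hS]
  exact PosDef.posSemidef_add (h.add (hΨ.smul ha)) (PosDef.one.smul hb)

theorem lmi_solution_stabilizes_consistency_set_general
    {n m M : ℕ}
    (Φ11 : Matrix (Fin n) (Fin n) ℝ) (Φ12 : Matrix (Fin n) (Fin M) ℝ)
    (Φ22 : Matrix (Fin M) (Fin M) ℝ)
    (X Xp : Matrix (Fin n) (Fin M) ℝ) (U : Matrix (Fin m) (Fin M) ℝ)
    (P : Matrix (Fin n) (Fin n) ℝ) (L : Matrix (Fin m) (Fin n) ℝ) (a b : ℝ)
    (hPpd : P.PosDef) (ha : 0 ≤ a) (hb : 0 < b)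
    (hLMI : StabLMI Φ11 Φ12 Φ22 X Xp U P L a b) :
    ∀ (A : Matrix (Fin n) (Fin n) ℝ) (B : Matrix (Fin n) (Fin m) ℝ),
      Consistent Φ11 Φ12 Φ22 X Xp U A B →
      (P - (A + B * (L * P⁻¹)) * P * (A + B * (L * P⁻¹))ᵀ).PosDef := by
  rintro A B ⟨W, hW, hXp⟩
  have hsymm : Pᵀ = P := (conjTranspose_eq_transpose_of_trivial P).symm.trans hPpd.isHermitian
  have hdet : IsUnit P.det := (isUnit_iff_isUnit_det P).mp hPpd.isUnit
  have hconj := ((stabLMI_iff ..).mp hLMI).conjTranspose_mul_mul_same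
    (lmiTest A B (-(P⁻¹ * Lᵀ * Bᵀ)))
  rw [conjTranspose_eq_transpose_of_trivial, Matrix.mul_sub, Matrix.sub_mul, Matrix.mul_smul,
    Matrix.smul_mul, transpose_lmiTest_mul_lmiBlock_mul_lmiTest_of_gain B L A b hsymm hdet,
    transpose_lmiTest_mul_lmiDataGram_mul_lmiTest A B _ hXp] at hconj
  exact posDef_of_posSemidef_sub_smul_one_sub_smul hconj hW ha hb

theorem lmi_solution_stabilizes_consistency_set
    {n m M : ℕ} (hn : 0 < n) (hm : 0 < m) (hM : 0 < M)
    (Φ11 : Matrix (Fin n) (Fin n) ℝ) (Φ12 : Matrix (Fin n) (Fin M) ℝ)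
    (Φ22 : Matrix (Fin M) (Fin M) ℝ)
    (hΦ11 : Φ11 = Φ11ᵀ) (hΦ22sym : Φ22 = Φ22ᵀ) (hΦ22 : (-Φ22).PosDef)
    (X Xp : Matrix (Fin n) (Fin M) ℝ) (U : Matrix (Fin m) (Fin M) ℝ)
    (hslater : Slater Φ11 Φ12 Φ22 X Xp U)
    (P : Matrix (Fin n) (Fin n) ℝ) (L : Matrix (Fin m) (Fin n) ℝ) (a b : ℝ)
    (hP : P = Pᵀ) (hPpd : P.PosDef) (ha : 0 ≤ a) (hb : 0 < b)
    (hLMI : StabLMI Φ11 Φ12 Φ22 X Xp U P L a b) :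
    ∀ (A : Matrix (Fin n) (Fin n) ℝ) (B : Matrix (Fin n) (Fin m) ℝ),
      Consistent Φ11 Φ12 Φ22 X Xp U A B →
      (P - (A + B * (L * P⁻¹)) * P * (A + B * (L * P⁻¹))ᵀ).PosDef :=
  lmi_solution_stabilizes_consistency_set_general Φ11 Φ12 Φ22 X Xp U P L a b hPpd ha hb hLMI
end
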